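/- arXiv:2105.14502 — 2 statements merged into one kernel-verified Lean document; each statement's English description precedes it below -/
import Mathlib

section
/- The NIG density f(x) = (α/π) exp(δ√(α²-β²) - βμ) φ(x)^{-1/2} K_1(δα φ(x)^{1/2}) e^{βx}, with φ(x) = 1 + ((x-μ)/δ)², is asymptotically equivalent as x → ∞ to C · x^{-3/2} e^{-(α-β)x} for an explicit positive constant C, provided α > β ≥ 0; in particular the NIG density is semi-heavy tailed. -/
open MeasureTheory Real Filter

/-- Modified Bessel function of the third kind. -/
noncomputable def besselK (ν x : ℝ) : ℝ :=
  (1 / 2) * ∫ y in Set.Ioi (0 : ℝ), y ^ (ν - 1) * Real.exp (-x * (y + y⁻¹) / 2)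

/-!
Put `R = δ √(1 + ((x - μ) / δ) ^ 2) = √(δ ^ 2 + (x - μ) ^ 2)`. The ratio of the density to the
claimed tail is exactly `√(2 / π) · K₁(αR) e^{αR} √(αR) · (x / R) ^ (3 / 2) · e^{α (x - μ - R)}`.
The last two factors tend to `1` because `R - (x - μ) = δ² / (R + x - μ) → 0`. The first tends to
`1` because `K₁(z) e^z √z → √(π / 2)`: substituting `y = 1 + u / √z` in the integral defining
`K₁(z)` turns `K₁(z) e^z √z` into half the integral of `exp (-u² / (2 (1 + u / √z)))` over
`u > -√z`, which converges to half the Gaussian integral `√(2π)` by dominated convergence.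
-/

open Set Topology

/-- The integrand of `besselK 1 (c ^ 2) * exp (c ^ 2) * c` after the substitution
`y = 1 + u / c`. -/
noncomputable def besselKOneKernel (c u : ℝ) : ℝ :=
  (Ioi (-c)).indicator (fun u => exp (-u ^ 2 / (2 * (1 + u / c)))) u

lemma besselK_one_sq_mul_exp_mul_eq {c : ℝ} (hc : 0 < c) :
    besselK 1 (c ^ 2) * exp (c ^ 2) * c = (1 / 2) * ∫ u, besselKOneKernel c u := by
  set g : ℝ → ℝ := (Ioi 0).indicator fun y => exp (c ^ 2) * exp (-c ^ 2 * (y + y⁻¹) / 2) with hg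
  have hsubst : ∀ u, g (u / c + 1) = besselKOneKernel c u := by
    intro u
    have hiff : u / c + 1 ∈ Ioi 0 ↔ -c < u := by
      rw [mem_Ioi, ← neg_lt_iff_pos_add, lt_div_iff₀ hc, neg_one_mul]
    rw [hg, besselKOneKernel]
    by_cases hu : -c < u
    · rw [indicator_of_mem (hiff.2 hu), indicator_of_mem (mem_Ioi.2 hu), ← exp_add]
      have hcu : u + c ≠ 0 := by linarith
      have hcu' : c + u ≠ 0 := by linarith
      congr 1
      field_simp
      ring
    · rw [indicator_of_notMem (mt hiff.1 hu), indicator_of_notMem (mt mem_Ioi.1 hu)]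
  calc besselK 1 (c ^ 2) * exp (c ^ 2) * c
      = (1 / 2) * (c * ∫ y in Ioi 0, exp (c ^ 2) * exp (-c ^ 2 * (y + y⁻¹) / 2)) := by
        simp only [besselK, sub_self, rpow_zero, one_mul, integral_const_mul]; ring
    _ = (1 / 2) * (c * ∫ y, g (y + 1)) := by
        rw [integral_add_right_eq_self, integral_indicator measurableSet_Ioi]
    _ = (1 / 2) * ∫ u, besselKOneKernel c u := by
        rw [← funext hsubst, Measure.integral_comp_div (fun y => g (y + 1)), abs_of_pos hc,
          smul_eq_mul]

noncomputable def besselKOneKernelBound (u : ℝ) : ℝ :=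
  exp (-(1 / 2) * u ^ 2) + (Ioi 0).indicator (fun u => exp (1 / 4) * exp (-(1 / 4) * u)) u

lemma integrable_besselKOneKernelBound : Integrable besselKOneKernelBound :=
  (integrable_exp_neg_mul_sq (by norm_num)).add <|
    (integrable_indicator_iff measurableSet_Ioi).2 <|
      (exp_neg_integrableOn_Ioi 0 (by norm_num)).const_mul _

lemma besselKOneKernel_le {c : ℝ} (hc : 1 ≤ c) (u : ℝ) :
    besselKOneKernel c u ≤ besselKOneKernelBound u := by
  have hbound_nonneg : 0 ≤ (Ioi 0).indicator (fun u => exp (1 / 4) * exp (-(1 / 4) * u)) u :=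
    indicator_nonneg (fun _ _ => by positivity) u
  rw [besselKOneKernel, besselKOneKernelBound]
  by_cases hu : -c < u
  · rw [indicator_of_mem (mem_Ioi.2 hu)]
    have hden : 0 < 1 + u / c := by
      rw [← neg_lt_iff_pos_add', lt_div_iff₀ (by linarith), neg_one_mul]; exact hu
    rcases le_or_gt u 0 with hu0 | hu0
    · have : u / c ≤ 0 := div_nonpos_of_nonpos_of_nonneg hu0 (by linarith)
      refine le_add_of_le_of_nonneg (exp_le_exp.2 ?_) hbound_nonneg
      rw [div_le_iff₀ (by positivity)]
      nlinarith [sq_nonneg u]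
    · rw [indicator_of_mem (mem_Ioi.2 hu0), ← exp_add]
      refine le_add_of_nonneg_of_le (by positivity) (exp_le_exp.2 ?_)
      have : u / c ≤ u := div_le_self hu0.le hc
      rw [div_le_iff₀ (by positivity)]
      nlinarith [sq_nonneg (u - 1)]
  · rw [indicator_of_notMem (mt mem_Ioi.1 hu)]
    positivity

lemma tendsto_besselKOneKernel (u : ℝ) :
    Tendsto (fun c => besselKOneKernel c u) atTop (𝓝 (exp (-(1 / 2) * u ^ 2))) := by
  have hlim : Tendsto (fun c => -u ^ 2 / (2 * (1 + u / c))) atTop (𝓝 (-(1 / 2) * u ^ 2)) := by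
    have hden : Tendsto (fun c : ℝ => 2 * (1 + u / c)) atTop (𝓝 2) := by
      simpa using (((tendsto_const_nhds (x := u)).div_atTop tendsto_id).const_add 1).const_mul 2
    rw [show -(1 / 2) * u ^ 2 = -u ^ 2 / 2 by ring]
    exact tendsto_const_nhds.div hden two_ne_zero
  refine ((continuous_exp.tendsto _).comp hlim).congr' ?_
  filter_upwards [eventually_gt_atTop (-u)] with c hc
  simp [besselKOneKernel, indicator_of_mem (mem_Ioi.2 (neg_lt.1 hc))]

lemma tendsto_integral_besselKOneKernel :
    Tendsto (fun c => ∫ u, besselKOneKernel c u) atTop (𝓝 √(2 * π)) := by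
  have hgauss : ∫ u, exp (-(1 / 2) * u ^ 2) = √(2 * π) := by
    rw [integral_gaussian]; norm_num [div_eq_mul_inv, mul_comm]
  rw [← hgauss]
  refine tendsto_integral_filter_of_dominated_convergence _ ?_ ?_
    integrable_besselKOneKernelBound (.of_forall tendsto_besselKOneKernel)
  · refine .of_forall fun c => (Measurable.indicator ?_ measurableSet_Ioi).aestronglyMeasurable
    fun_prop
  · filter_upwards [eventually_ge_atTop 1] with c hc
    refine .of_forall fun u => ?_
    have hnonneg : 0 ≤ besselKOneKernel c u := indicator_nonneg (fun _ _ => (exp_pos _).le) u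
    rw [norm_of_nonneg hnonneg]
    exact besselKOneKernel_le hc u

theorem tendsto_besselK_one_mul_exp_mul_sqrt :
    Tendsto (fun x => besselK 1 x * exp x * √x) atTop (𝓝 √(π / 2)) := by
  have hsq : Tendsto (fun c => besselK 1 (c ^ 2) * exp (c ^ 2) * c) atTop (𝓝 √(π / 2)) := by
    have hconst : (1 / 2 : ℝ) * √(2 * π) = √(π / 2) := by
      rw [show 2 * π = π / 2 * 2 ^ 2 by ring, sqrt_mul (by positivity), sqrt_sq two_pos.le]; ring
    rw [← hconst]
    refine (tendsto_integral_besselKOneKernel.const_mul _).congr' ?_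
    filter_upwards [eventually_gt_atTop 0] with c hc
    exact (besselK_one_sq_mul_exp_mul_eq hc).symm
  refine (hsq.comp tendsto_sqrt_atTop).congr' ?_
  filter_upwards [eventually_ge_atTop 0] with x hx
  simp [sq_sqrt hx]

lemma tendsto_sqrt_sq_add_sub_self (c : ℝ) :
    Tendsto (fun t => √(t ^ 2 + c) - t) atTop (𝓝 0) := by
  have hsum : Tendsto (fun t => √(t ^ 2 + c) + t) atTop atTop :=
    tendsto_atTop_mono (fun t => le_add_of_nonneg_left (sqrt_nonneg _)) tendsto_id
  refine (tendsto_const_nhds (x := c).div_atTop hsum).congr' ?_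
  filter_upwards [(tendsto_pow_atTop two_ne_zero).eventually_ge_atTop (-c),
    eventually_gt_atTop 0] with t hc ht
  rw [div_eq_iff (by positivity)]
  nlinarith [sq_sqrt (show 0 ≤ t ^ 2 + c by linarith)]

lemma Filter.Tendsto.div_nhds_one_of_tendsto_sub {α : Type*} {l : Filter α} {f g : α → ℝ}
    {a : ℝ} (hg : Tendsto g l atTop) (h : Tendsto (fun x => f x - g x) l (𝓝 a)) :
    Tendsto (fun x => f x / g x) l (𝓝 1) := by
  have hlim := (h.div_atTop hg).const_add 1
  rw [add_zero] at hlim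
  refine hlim.congr' ?_
  filter_upwards [hg.eventually_ne_atTop 0] with x hx
  field_simp
  ring

noncomputable def nigDensity (α β μ δ x : ℝ) : ℝ :=
  α / π * exp (δ * √(α ^ 2 - β ^ 2) - β * μ) * (1 + ((x - μ) / δ) ^ 2) ^ (-(1 : ℝ) / 2) *
    besselK 1 (δ * α * √(1 + ((x - μ) / δ) ^ 2)) * exp (β * x)

noncomputable def nigTail (α β μ δ x : ℝ) : ℝ :=
  √(α / (2 * π)) * δ * exp (δ * √(α ^ 2 - β ^ 2) - β * μ + α * μ) * x ^ (-(3 : ℝ) / 2) *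
    exp (-(α - β) * x)

noncomputable def nigRadius (μ δ x : ℝ) : ℝ :=
  δ * √(1 + ((x - μ) / δ) ^ 2)

lemma tendsto_nigRadius_sub {δ : ℝ} (hδ : 0 < δ) (μ : ℝ) :
    Tendsto (fun x => nigRadius μ δ x - (x - μ)) atTop (𝓝 0) := by
  have hshift : Tendsto (fun x : ℝ => x - μ) atTop atTop := by
    simpa [sub_eq_add_neg] using tendsto_atTop_add_const_right atTop (-μ) tendsto_id
  refine ((tendsto_sqrt_sq_add_sub_self (δ ^ 2)).comp hshift).congr fun x => ?_
  rw [Function.comp_apply, nigRadius, sub_left_inj,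
    sqrt_eq_iff_mul_self_eq (by positivity) (by positivity), mul_mul_mul_comm,
    mul_self_sqrt (by positivity)]
  field_simp
  ring

lemma tendsto_nigRadius_atTop {δ : ℝ} (hδ : 0 < δ) (μ : ℝ) :
    Tendsto (nigRadius μ δ) atTop atTop :=
  ((tendsto_nigRadius_sub hδ μ).add_atTop (tendsto_atTop_add_const_right atTop (-μ) tendsto_id))
    |>.congr fun x => by dsimp; ring

lemma nigDensity_div_nigTail {α β μ δ x : ℝ} (hα : 0 < α) (hδ : 0 < δ) (hx : 0 < x) :
    nigDensity α β μ δ x / nigTail α β μ δ x =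
      √(2 / π) * (besselK 1 (α * nigRadius μ δ x) * exp (α * nigRadius μ δ x) *
        √(α * nigRadius μ δ x)) * (x / nigRadius μ δ x) ^ (3 / 2 : ℝ) *
      exp (α * (x - μ - nigRadius μ δ x)) := by
  set s := √(1 + ((x - μ) / δ) ^ 2) with hs_def
  have hs : 0 < s := sqrt_pos.2 (by positivity)
  have hpow_s : (1 + ((x - μ) / δ) ^ 2) ^ (-(1 : ℝ) / 2) = s⁻¹ := by
    rw [neg_div, rpow_neg (by positivity), ← sqrt_eq_rpow]
  have hpow_x : x ^ (-(3 : ℝ) / 2) = (x ^ (3 / 2 : ℝ))⁻¹ := by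
    rw [neg_div, rpow_neg hx.le]
  have hpow_R : (δ * s) ^ (3 / 2 : ℝ) = δ * s * √(δ * s) := by
    rw [show (3 / 2 : ℝ) = 1 + 1 / 2 by norm_num, rpow_add (by positivity), rpow_one,
      ← sqrt_eq_rpow]
  have hsqrt : π * (√(2 / π) * √α * √(α / (2 * π))) = α := by
    rw [← sqrt_mul (by positivity), ← sqrt_mul (by positivity),
      show 2 / π * α * (α / (2 * π)) = (α / π) ^ 2 by field_simp, sqrt_sq (by positivity)]
    field_simp
  have hexp : exp (α * (δ * s)) * exp (α * (x - μ - δ * s)) *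
      exp (δ * √(α ^ 2 - β ^ 2) - β * μ + α * μ) * exp (-(α - β) * x) =
      exp (δ * √(α ^ 2 - β ^ 2) - β * μ) * exp (β * x) := by
    simp only [← exp_add]; congr 1; ring
  rw [nigDensity, nigTail, nigRadius, div_rpow hx.le (by positivity), hpow_s, hpow_x, hpow_R,
    ← hs_def, show δ * α * s = α * (δ * s) by ring, sqrt_mul hα.le]
  have : x ^ (3 / 2 : ℝ) ≠ 0 := by positivity
  have : √(δ * s) ≠ 0 := by positivity
  have : √(α / (2 * π)) ≠ 0 := by positivity
  have : exp (δ * √(α ^ 2 - β ^ 2) - β * μ + α * μ) ≠ 0 := exp_ne_zero _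
  have : exp (-(α - β) * x) ≠ 0 := exp_ne_zero _
  -- Freeze the transcendental factors, so that `field_simp` cannot reshape their arguments.
  generalize besselK 1 (α * (δ * s)) = K
  generalize √(2 / π) = c₁ at *
  generalize √α = a at *
  generalize √(α / (2 * π)) = c₂ at *
  generalize exp (α * (δ * s)) = A at *
  generalize exp (α * (x - μ - δ * s)) = B at *
  generalize exp (δ * √(α ^ 2 - β ^ 2) - β * μ + α * μ) = E₂ at *
  generalize exp (-(α - β) * x) = E₃ at *
  field_simp
  linear_combination -(K * A * B * E₂ * E₃) * hsqrt - α * K * hexp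

/-- The NIG density is asymptotically `C * x^(-3/2) * exp (-(α-β)x)` as `x → ∞`,
for the explicit positive constant `C = √(α/(2π)) δ exp (δ√(α²-β²) - βμ + αμ)`;
in particular it is semi-heavy tailed. -/
theorem nig_density_tail (α β μ δ : ℝ) (hδ : 0 < δ) (hβ : 0 ≤ β) (hαβ : β < α) :
    Tendsto (fun x : ℝ =>
      (α / π * Real.exp (δ * Real.sqrt (α ^ 2 - β ^ 2) - β * μ) *
          (1 + ((x - μ) / δ) ^ 2) ^ (-(1 : ℝ) / 2) *
          besselK 1 (δ * α * Real.sqrt (1 + ((x - μ) / δ) ^ 2)) * Real.exp (β * x)) /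
        (Real.sqrt (α / (2 * π)) * δ *
          Real.exp (δ * Real.sqrt (α ^ 2 - β ^ 2) - β * μ + α * μ) *
          x ^ (-(3 : ℝ) / 2) * Real.exp (-(α - β) * x)))
      atTop (nhds 1) := by
  show Tendsto (fun x => nigDensity α β μ δ x / nigTail α β μ δ x) atTop (𝓝 1)
  have hα : 0 < α := hβ.trans_lt hαβ
  have hR_sub := tendsto_nigRadius_sub hδ μ
  have hR_atTop := tendsto_nigRadius_atTop hδ μ
  have hbessel : Tendsto (fun x => √(2 / π) * (besselK 1 (α * nigRadius μ δ x) *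
      exp (α * nigRadius μ δ x) * √(α * nigRadius μ δ x))) atTop (𝓝 1) := by
    have hconst : √(2 / π) * √(π / 2) = 1 := by
      rw [← sqrt_mul (by positivity), div_mul_div_comm, mul_comm 2 π, div_self (by positivity),
        sqrt_one]
    have hlim := (tendsto_besselK_one_mul_exp_mul_sqrt.comp (hR_atTop.const_mul_atTop hα)).const_mul
      √(2 / π)
    rwa [hconst] at hlim
  have hpow : Tendsto (fun x => (x / nigRadius μ δ x) ^ (3 / 2 : ℝ)) atTop (𝓝 1) := by
    have hsub : Tendsto (fun x => x - nigRadius μ δ x) atTop (𝓝 μ) := by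
      simpa using (tendsto_const_nhds (x := μ)).sub hR_sub |>.congr fun x => by ring
    simpa using (hR_atTop.div_nhds_one_of_tendsto_sub hsub).rpow_const (.inr (by norm_num))
  have hexp : Tendsto (fun x => exp (α * (x - μ - nigRadius μ δ x))) atTop (𝓝 1) := by
    have : Tendsto (fun x => α * (x - μ - nigRadius μ δ x)) atTop (𝓝 0) := by
      simpa using (hR_sub.const_mul (-α)).congr fun x => by ring
    exact tendsto_exp_nhds_zero_nhds_one.comp this
  have hprod := (hbessel.mul hpow).mul hexp
  rw [mul_one, mul_one] at hprod
  refine hprod.congr' ?_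
  filter_upwards [eventually_gt_atTop 0] with x hx
  rw [nigDensity_div_nigTail hα hδ hx]
end

section
/- If ω → ∞ then K_ν(ω) ~ √(π/2) e^{-ω} ω^{-1/2}, i.e. lim_{ω→∞} K_ν(ω) e^{ω} ω^{1/2} = √(π/2), for the modified Bessel function K_ν of fixed order ν. -/
/-!
Laplace's method. Substituting `y = exp u` gives `K_ν(ω) = ½ ∫ exp (ν u - ω cosh u) du`, and
rescaling `u = s / √ω` gives `K_ν(ω) e^ω √ω = ½ ∫ exp (ν s / √ω - ω (cosh (s / √ω) - 1)) ds`.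
Since `cosh u - 1 ~ u² / 2` the integrand tends to `exp (-s² / 2)`, and since
`cosh u - 1 ≥ u² / 2` it is dominated by `exp (ν²) exp (-s² / 4)` for `ω ≥ 1`.
Dominated convergence and the Gaussian integral `∫ exp (-s² / 2) = √(2π)` conclude.
-/

open MeasureTheory Real Filter

open Set Topology

theorem integral_Ioi_zero_eq_integral_exp_smul {E : Type*} [NormedAddCommGroup E]
    [NormedSpace ℝ E] (g : ℝ → E) :
    ∫ y in Ioi 0, g y = ∫ u, exp u • g (exp u) := by
  rw [← range_exp, ← image_univ, integral_image_eq_integral_abs_deriv_smul MeasurableSet.univ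
    (fun u _ ↦ (hasDerivAt_exp u).hasDerivWithinAt) exp_injective.injOn, Measure.restrict_univ]
  simp only [abs_of_pos (exp_pos _)]

theorem besselK_eq_integral_exp_sub_mul_cosh (ν x : ℝ) :
    besselK ν x = (1 / 2) * ∫ u, exp (ν * u - x * cosh u) := by
  rw [besselK, integral_Ioi_zero_eq_integral_exp_smul]
  congr 2 with u
  rw [smul_eq_mul, rpow_def_of_pos (exp_pos u), log_exp, cosh_eq, exp_neg, ← exp_add, ← exp_add]
  ring_nf

noncomputable def besselKRescaledIntegrand (ν ω s : ℝ) : ℝ :=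
  exp (ν * (s / √ω) - ω * (cosh (s / √ω) - 1))

theorem besselK_mul_exp_mul_sqrt {ω : ℝ} (ν : ℝ) (hω : 0 < ω) :
    besselK ν ω * exp ω * √ω = (1 / 2) * ∫ s, besselKRescaledIntegrand ν ω s := by
  have hshift : (∫ u, exp (ν * u - ω * cosh u)) * exp ω
      = ∫ u, exp (ν * u - ω * (cosh u - 1)) := by
    rw [← integral_mul_const]
    congr 1 with u
    rw [← exp_add]
    ring_nf
  have hscale := Measure.integral_comp_div (fun u ↦ exp (ν * u - ω * (cosh u - 1))) √ω
  rw [smul_eq_mul, abs_of_pos (sqrt_pos.2 hω)] at hscale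
  unfold besselKRescaledIntegrand
  rw [hscale, ← hshift, besselK_eq_integral_exp_sub_mul_cosh]
  ring

theorem Real.tendsto_sinh_div_self : Tendsto (fun x ↦ sinh x / x) (𝓝[≠] 0) (𝓝 1) := by
  have h := hasDerivAt_iff_tendsto_slope.1 (hasDerivAt_sinh 0)
  rw [cosh_zero] at h
  exact h.congr fun x ↦ by simp [slope_def_field]

theorem Real.cosh_sub_one_eq (x : ℝ) : cosh x - 1 = 2 * sinh (x / 2) ^ 2 := by
  nth_rw 1 [← mul_div_cancel₀ x two_ne_zero, cosh_two_mul, cosh_sq]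
  ring

theorem Real.sq_div_two_le_cosh_sub_one (x : ℝ) : x ^ 2 / 2 ≤ cosh x - 1 := by
  have h : |x / 2| ≤ |sinh (x / 2)| := by
    rw [abs_sinh]; exact self_le_sinh_iff.2 (abs_nonneg _)
  have := sq_le_sq.2 h
  rw [cosh_sub_one_eq]
  linarith

theorem Real.tendsto_cosh_sub_one_div_sq :
    Tendsto (fun x ↦ (cosh x - 1) / x ^ 2) (𝓝[≠] 0) (𝓝 (1 / 2)) := by
  have hhalf : Tendsto (fun x : ℝ ↦ x / 2) (𝓝[≠] 0) (𝓝[≠] 0) :=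
    tendsto_nhdsWithin_of_tendsto_nhds_of_eventually_within _
      (((continuous_id.div_const (2 : ℝ)).tendsto' 0 0 (zero_div 2)).mono_left nhdsWithin_le_nhds)
      (eventually_nhdsWithin_of_forall fun x hx ↦ div_ne_zero hx two_ne_zero)
  have h := ((tendsto_sinh_div_self.comp hhalf).pow 2).const_mul (1 / 2)
  rw [one_pow, mul_one] at h
  refine h.congr' (eventually_nhdsWithin_of_forall fun x hx ↦ ?_)
  simp only [Function.comp_apply, cosh_sub_one_eq]
  field_simp

theorem tendsto_mul_cosh_div_sqrt_sub_one (s : ℝ) :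
    Tendsto (fun ω ↦ ω * (cosh (s / √ω) - 1)) atTop (𝓝 (s ^ 2 / 2)) := by
  rcases eq_or_ne s 0 with rfl | hs
  · simp
  have hu : Tendsto (fun ω ↦ s / √ω) atTop (𝓝[≠] 0) :=
    tendsto_nhdsWithin_of_tendsto_nhds_of_eventually_within _
      (tendsto_const_nhds.div_atTop tendsto_sqrt_atTop)
      ((eventually_gt_atTop 0).mono fun ω hω ↦ div_ne_zero hs (sqrt_pos.2 hω).ne')
  have h := (tendsto_cosh_sub_one_div_sq.comp hu).const_mul (s ^ 2)
  rw [mul_one_div] at h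
  refine h.congr' ((eventually_gt_atTop 0).mono fun ω hω ↦ ?_)
  rw [Function.comp_apply, div_pow, sq_sqrt hω.le]
  field_simp

theorem tendsto_besselKRescaledIntegrand (ν s : ℝ) :
    Tendsto (fun ω ↦ besselKRescaledIntegrand ν ω s) atTop (𝓝 (exp (-(1 / 2) * s ^ 2))) := by
  have hlin : Tendsto (fun ω ↦ ν * (s / √ω)) atTop (𝓝 0) := by
    simpa using (tendsto_const_nhds.div_atTop tendsto_sqrt_atTop).const_mul ν
  have h := (hlin.sub (tendsto_mul_cosh_div_sqrt_sub_one s)).rexp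
  rwa [zero_sub, ← neg_div, neg_div, div_eq_inv_mul, ← one_div, ← neg_mul] at h

theorem norm_besselKRescaledIntegrand_le {ω : ℝ} (ν s : ℝ) (hω : 1 ≤ ω) :
    ‖besselKRescaledIntegrand ν ω s‖ ≤ exp (ν ^ 2) * exp (-(1 / 4) * s ^ 2) := by
  have hsqrt : 1 ≤ √ω := one_le_sqrt.2 hω
  have hlin : ν * (s / √ω) ≤ |ν| * |s| :=
    calc ν * (s / √ω) ≤ |ν| * (|s| / √ω) := (le_abs_self _).trans_eq <| by
          rw [abs_mul, abs_div, abs_of_pos (by linarith : 0 < √ω)]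
      _ ≤ |ν| * |s| := by gcongr; exact div_le_self (abs_nonneg s) hsqrt
  have hquad : s ^ 2 / 2 ≤ ω * (cosh (s / √ω) - 1) :=
    calc s ^ 2 / 2 = ω * ((s / √ω) ^ 2 / 2) := by
          rw [div_pow, sq_sqrt (by positivity)]; field_simp
      _ ≤ ω * (cosh (s / √ω) - 1) := by gcongr; exact sq_div_two_le_cosh_sub_one _
  have hamgm : |ν| * |s| ≤ ν ^ 2 + s ^ 2 / 4 := by
    nlinarith [sq_nonneg (|ν| - |s| / 2), sq_abs ν, sq_abs s]
  rw [besselKRescaledIntegrand, norm_eq_abs, abs_exp, ← exp_add, exp_le_exp]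
  linarith

theorem continuous_besselKRescaledIntegrand (ν ω : ℝ) :
    Continuous (besselKRescaledIntegrand ν ω) := by
  unfold besselKRescaledIntegrand
  fun_prop

theorem tendsto_integral_besselKRescaledIntegrand (ν : ℝ) :
    Tendsto (fun ω ↦ ∫ s, besselKRescaledIntegrand ν ω s) atTop (𝓝 √(2 * π)) := by
  rw [show 2 * π = π / (1 / 2) by ring, ← integral_gaussian]
  refine tendsto_integral_filter_of_dominated_convergence _
    (.of_forall fun ω ↦ (continuous_besselKRescaledIntegrand ν ω).aestronglyMeasurable)
    ((eventually_ge_atTop 1).mono fun ω hω ↦ .of_forall fun s ↦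
      norm_besselKRescaledIntegrand_le ν s hω)
    ((integrable_exp_neg_mul_sq (by norm_num)).const_mul _)
    (.of_forall (tendsto_besselKRescaledIntegrand ν))

theorem besselK_asymptotic (ν : ℝ) :
    Tendsto (fun ω : ℝ => besselK ν ω * Real.exp ω * Real.sqrt ω)
      atTop (nhds (Real.sqrt (π / 2))) := by
  have hconst : (1 / 2) * √(2 * π) = √(π / 2) := by
    rw [← sqrt_sq (by norm_num : (0 : ℝ) ≤ 1 / 2), ← sqrt_mul (by positivity)]
    ring_nf
  rw [← hconst]
  exact ((tendsto_integral_besselKRescaledIntegrand ν).const_mul _).congr'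
    ((eventually_gt_atTop 0).mono fun ω hω ↦ (besselK_mul_exp_mul_sqrt ν hω).symm)
end
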